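/- Let G be the rewrite game over {a,b} with rules a^{k_1} → ε, ..., a^{k_n} → ε, b^{ℓ_1} → ε, ..., b^{ℓ_m} → ε, where 1 < k_1 ≤ ... ≤ k_n and 1 < ℓ_1 ≤ ... ≤ ℓ_m. For all i, j ≥ 0, the word u_{i,j} = b^{ℓ_1 - 1} (a b^{ℓ_1 - 1})^i (b a^{k_1 - 1})^j is a P-position of G if and only if i ≥ j. -/

import Mathlib

inductive AB | a | b
deriving DecidableEq

/-- One move of the taking-and-merging game whose rules are `a^k → ε` for `k ∈ K`
and `b^ℓ → ε` for `ℓ ∈ L`. -/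
def Step (K L : Finset ℕ) (w w' : List AB) : Prop :=
  ∃ x y : List AB, w' = x ++ y ∧
    ((∃ k ∈ K, w = x ++ List.replicate k AB.a ++ y) ∨
     (∃ l ∈ L, w = x ++ List.replicate l AB.b ++ y))

/-- The word `u_{i,j} = b^{ℓ₁-1} (a b^{ℓ₁-1})^i (b a^{k₁-1})^j`. -/
def u (k1 l1 i j : ℕ) : List AB :=
  List.replicate (l1 - 1) AB.b ++
    (List.replicate i (AB.a :: List.replicate (l1 - 1) AB.b)).flatten ++
    (List.replicate j (AB.b :: List.replicate (k1 - 1) AB.a)).flatten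


/-!
Put `c = ℓ₁ - 1`, `d = k₁ - 1` and regroup `u_{i,j} = (b^c a)^i b^c (b a^d)^j`. Cut a word into
its maximal runs: a deletable factor `σ^n` has `n ≥ k₁` or `n ≥ ℓ₁`, so it sits inside a single run
at least that long. In `u_{i,0}` all runs are too short, so it is terminal, hence a P-position.
For `j > 0` the only long run of `u_{i,j}` is `b^{c+1}`, and deleting it leaves
`(b^c a)^i a^d (b a^d)^{j-1}`. For `i = 0` this word is terminal, so `u_{0,j}` is not a P-position;
for `i > 0` its only long run is `a^{d+1}`, whose deletion gives `u_{i-1,j-1}`. So `u_{i,j}` and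
`u_{i-1,j-1}` have the same outcome, and induction on `i` finishes the proof.
-/

open List

section MaximalRuns

variable {α : Type*}

def expandRuns (r : List (α × ℕ)) : List α := r.flatMap fun p => replicate p.2 p.1

@[simp] lemma expandRuns_nil : expandRuns ([] : List (α × ℕ)) = [] := rfl

@[simp] lemma expandRuns_cons (p : α × ℕ) (r : List (α × ℕ)) :
    expandRuns (p :: r) = replicate p.2 p.1 ++ expandRuns r := rfl

@[simp] lemma expandRuns_append (r s : List (α × ℕ)) :
    expandRuns (r ++ s) = expandRuns r ++ expandRuns s :=
  flatMap_append

@[simp] lemma expandRuns_flatten_replicate (i : ℕ) (r : List (α × ℕ)) :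
    expandRuns (replicate i r).flatten = (replicate i (expandRuns r)).flatten := by
  induction i with
  | zero => rfl
  | succ i ih => simp [replicate_succ, ih]

def IsMaximalRuns (r : List (α × ℕ)) : Prop :=
  r.IsChain (fun p q => p.1 ≠ q.1) ∧ ∀ p ∈ r, 0 < p.2

lemma IsMaximalRuns.infix {r s : List (α × ℕ)} (hr : IsMaximalRuns r) (h : s <:+: r) :
    IsMaximalRuns s :=
  ⟨hr.1.infix h, fun p hp => hr.2 p (h.subset hp)⟩

lemma IsMaximalRuns.head?_expandRuns_ne {σ : α} {n : ℕ} {r : List (α × ℕ)}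
    (hr : IsMaximalRuns ((σ, n) :: r)) : (expandRuns r).head? ≠ some σ := by
  rcases r with _ | ⟨⟨τ, m⟩, r⟩
  · simp
  · obtain ⟨m, rfl⟩ := Nat.exists_eq_add_of_lt (hr.2 (τ, m) (by simp))
    simpa [replicate_succ, eq_comm] using (isChain_cons_cons.1 hr.1).1

lemma eq_replicate_sub_append_of_replicate_append_eq {σ : α} {k n : ℕ} {y z : List α}
    (h : replicate k σ ++ y = replicate n σ ++ z) (hz : z.head? ≠ some σ) :
    k ≤ n ∧ y = replicate (n - k) σ ++ z := by
  induction k generalizing n with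
  | zero => simpa using h
  | succ k ih =>
    rcases n with _ | n
    · simp only [replicate_zero, nil_append] at h
      simp [← h, replicate_succ] at hz
    · simpa [replicate_succ] using ih (by simpa [replicate_succ] using h)

theorem IsMaximalRuns.exists_run_of_expandRuns_eq {r : List (α × ℕ)} (hr : IsMaximalRuns r)
    {x y : List α} {σ : α} {k : ℕ} (hk : 0 < k) (h : expandRuns r = x ++ replicate k σ ++ y) :
    ∃ r₁ r₂ n p q, r = r₁ ++ (σ, n) :: r₂ ∧ p + k + q = n ∧
      x = expandRuns r₁ ++ replicate p σ ∧ y = replicate q σ ++ expandRuns r₂ := by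
  induction r generalizing x with
  | nil =>
    simp only [expandRuns_nil, nil_eq, append_eq_nil_iff, replicate_eq_nil_iff] at h
    omega
  | cons e r ih =>
    obtain ⟨τ, n⟩ := e
    have hr' : IsMaximalRuns r := hr.infix (suffix_cons _ _).isInfix
    rw [expandRuns_cons, append_assoc, append_eq_append_iff] at h
    rcases h with ⟨x', rfl, hx'⟩ | ⟨z, hnz, hz⟩
    · obtain ⟨r₁, r₂, m, p, q, rfl, hm, rfl, rfl⟩ := ih hr' (by rw [hx', append_assoc])
      exact ⟨(τ, n) :: r₁, r₂, m, p, q, rfl, hm, by simp, rfl⟩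
    obtain ⟨hlen, hx, hz'⟩ := replicate_eq_append_iff.1 hnz
    rcases z with _ | ⟨z₀, z⟩
    · obtain ⟨r₁, r₂, m, p, q, rfl, hm, h₁, rfl⟩ := ih hr' (x := []) (by simpa using hz.symm)
      refine ⟨(τ, n) :: r₁, r₂, m, p, q, rfl, hm, ?_, rfl⟩
      rw [expandRuns_cons, append_assoc, ← h₁, append_nil, hnz, append_nil]
    · have hστ : σ = τ := by
        obtain ⟨k, rfl⟩ := Nat.exists_eq_add_of_lt hk
        rw [hz'] at hz
        simpa [replicate_succ] using congrArg head? hz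
      subst hστ
      obtain ⟨hkz, hy⟩ := eq_replicate_sub_append_of_replicate_append_eq
        (hz.trans (by rw [← hz'])) hr.head?_expandRuns_ne
      exact ⟨[], r, n, x.length, (z₀ :: z).length - k, rfl, by omega, by simpa using hx, hy⟩

lemma replicate_append_cons_self (n : ℕ) (a : α) (l : List α) :
    replicate n a ++ a :: l = a :: (replicate n a ++ l) := by
  rw [← singleton_append, ← append_assoc, ← replicate_succ', replicate_succ, cons_append]

lemma flatten_replicate_append_comm (l m : List α) (i : ℕ) :
    (replicate i (l ++ m)).flatten ++ l = l ++ (replicate i (m ++ l)).flatten := by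
  induction i with
  | zero => simp
  | succ i ih => simp [replicate_succ, ih]

end MaximalRuns

def byLetter {β : Type*} (x y : β) : AB → β
  | .a => x
  | .b => y

lemma step_iff {K L : Finset ℕ} {w w' : List AB} :
    Step K L w w' ↔
      ∃ x y σ n, n ∈ byLetter K L σ ∧ w = x ++ replicate n σ ++ y ∧ w' = x ++ y := by
  constructor
  · rintro ⟨x, y, rfl, ⟨n, hn, rfl⟩ | ⟨n, hn, rfl⟩⟩
    exacts [⟨x, y, .a, n, hn, rfl, rfl⟩, ⟨x, y, .b, n, hn, rfl, rfl⟩]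
  · rintro ⟨x, y, _ | _, n, hn, rfl, rfl⟩
    exacts [⟨x, y, rfl, .inl ⟨n, hn, rfl⟩⟩, ⟨x, y, rfl, .inr ⟨n, hn, rfl⟩⟩]

section Moves

variable {K L : Finset ℕ} {m : AB → ℕ}

lemma not_step_expandRuns (hm : ∀ σ, ∀ n ∈ byLetter K L σ, m σ ≤ n) (hm₀ : ∀ σ, 0 < m σ)
    {r : List (AB × ℕ)} (hr : IsMaximalRuns r) (hshort : ∀ p ∈ r, p.2 < m p.1) (w : List AB) :
    ¬ Step K L (expandRuns r) w := by
  intro hstep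
  obtain ⟨x, y, σ, n, hn, hw, -⟩ := step_iff.1 hstep
  have hσn := hm σ n hn
  obtain ⟨r₁, r₂, l, p, q, rfl, hl, -⟩ :=
    hr.exists_run_of_expandRuns_eq ((hm₀ σ).trans_le hσn) hw
  have : l < m σ := hshort (σ, l) (by simp)
  omega

lemma step_expandRuns_iff (hm : ∀ σ, ∀ n ∈ byLetter K L σ, m σ ≤ n) (hm₀ : ∀ σ, 0 < m σ)
    {σ : AB} (hσ : m σ ∈ byLetter K L σ) {r₁ r₂ : List (AB × ℕ)}
    (hr : IsMaximalRuns (r₁ ++ (σ, m σ) :: r₂))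
    (h₁ : ∀ p ∈ r₁, p.2 < m p.1) (h₂ : ∀ p ∈ r₂, p.2 < m p.1) (w : List AB) :
    Step K L (expandRuns (r₁ ++ (σ, m σ) :: r₂)) w ↔ w = expandRuns r₁ ++ expandRuns r₂ := by
  refine ⟨fun hstep => ?_, fun hw => step_iff.2 ⟨_, _, σ, m σ, hσ, by simp, hw⟩⟩
  obtain ⟨x, y, τ, n, hn, hw, rfl⟩ := step_iff.1 hstep
  have hτn := hm τ n hn
  obtain ⟨s₁, s₂, l, p, q, hs, hl, rfl, rfl⟩ :=
    hr.exists_run_of_expandRuns_eq ((hm₀ τ).trans_le hτn) hw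
  have hnot₁ : (τ, l) ∉ r₁ := fun h => by have : l < m τ := h₁ _ h; omega
  have hnot₂ : (τ, l) ∉ r₂ := fun h => by have : l < m τ := h₂ _ h; omega
  obtain ⟨rfl, hστ, rfl⟩ := (append_cons_inj_of_notMem hnot₁ hnot₂).1 hs
  obtain ⟨rfl, rfl⟩ := Prod.mk.inj hστ
  obtain ⟨rfl, rfl⟩ : p = 0 ∧ q = 0 := by omega
  simp

end Moves

section Outcomes

variable {K L : Finset ℕ} {P : List AB → Prop}

lemma P_of_forall_not_step (hP : ∀ w, P w ↔ ∀ w', Step K L w w' → ¬ P w') {w : List AB}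
    (h : ∀ w', ¬ Step K L w w') : P w :=
  (hP w).2 fun w' hw => absurd hw (h w')

lemma P_iff_not_of_step_iff (hP : ∀ w, P w ↔ ∀ w', Step K L w w' → ¬ P w') {w w' : List AB}
    (h : ∀ v, Step K L w v ↔ v = w') : P w ↔ ¬ P w' := by
  rw [hP]
  exact ⟨fun hw => hw w' ((h w').2 rfl), fun hw' v hv => (h v).1 hv ▸ hw'⟩

end Outcomes

section Words

variable (c d : ℕ)

def prefixRuns (i : ℕ) : List (AB × ℕ) := (replicate i [(.b, c), (.a, 1)]).flatten

def suffixRuns (j : ℕ) : List (AB × ℕ) := (replicate j [(.b, 1), (.a, d)]).flatten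

@[simp] lemma suffixRuns_zero : suffixRuns d 0 = [] := rfl

lemma mem_prefixRuns {i : ℕ} {p : AB × ℕ} (hp : p ∈ prefixRuns c i) :
    p = (.b, c) ∨ p = (.a, 1) := by
  simp only [prefixRuns, mem_flatten, mem_replicate] at hp
  obtain ⟨_, ⟨-, rfl⟩, hp⟩ := hp
  simpa using hp

lemma mem_suffixRuns {j : ℕ} {p : AB × ℕ} (hp : p ∈ suffixRuns d j) :
    p = (.b, 1) ∨ p = (.a, d) := by
  simp only [suffixRuns, mem_flatten, mem_replicate] at hp
  obtain ⟨_, ⟨-, rfl⟩, hp⟩ := hp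
  simpa using hp

lemma u_eq_expandRuns (i j : ℕ) :
    u (d + 1) (c + 1) i j =
      expandRuns (prefixRuns c i) ++ replicate c .b ++ expandRuns (suffixRuns d j) := by
  have h := flatten_replicate_append_comm (replicate c AB.b) [AB.a] i
  simp only [singleton_append] at h
  simp [u, prefixRuns, suffixRuns, h]

lemma isMaximalRuns_prefixRuns_append_suffixRuns (hc : 0 < c) (hd : 0 < d) {x y : ℕ}
    (hx : 0 < x) (hy : 0 < y) (i j : ℕ) :
    IsMaximalRuns (prefixRuns c i ++ (.b, x) :: (.a, y) :: suffixRuns d j) := by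
  have hflat : prefixRuns c i ++ (.b, x) :: (.a, y) :: suffixRuns d j =
      (replicate i [(AB.b, c), (AB.a, 1)] ++
        [(AB.b, x), (AB.a, y)] :: replicate j [(AB.b, 1), (AB.a, d)]).flatten := by
    simp [prefixRuns, suffixRuns]
  refine ⟨?_, fun p hp => ?_⟩
  · rw [hflat, isChain_flatten (by simp)]
    refine ⟨by simp [or_imp, forall_and], isChain_append.2 ⟨isChain_replicate_of_rel _
      (by simp), isChain_cons.2 ⟨?_, isChain_replicate_of_rel _ (by simp)⟩, ?_⟩⟩
    · simp [head?_replicate]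
    · simp [getLast?_replicate]
  · simp only [mem_append, mem_cons] at hp
    rcases hp with hp | rfl | rfl | hp
    · rcases mem_prefixRuns c hp with rfl | rfl
      exacts [hc, one_pos]
    · exact hx
    · exact hy
    · rcases mem_suffixRuns d hp with rfl | rfl
      exacts [one_pos, hd]

lemma prefixRuns_short (hd : 0 < d) {i : ℕ} :
    ∀ p ∈ prefixRuns c i, p.2 < byLetter (d + 1) (c + 1) p.1 := by
  intro p hp
  rcases mem_prefixRuns c hp with rfl | rfl
  exacts [c.lt_succ_self, Nat.succ_lt_succ hd]

lemma suffixRuns_short (hc : 0 < c) {j : ℕ} :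
    ∀ p ∈ suffixRuns d j, p.2 < byLetter (d + 1) (c + 1) p.1 := by
  intro p hp
  rcases mem_suffixRuns d hp with rfl | rfl
  exacts [Nat.succ_lt_succ hc, d.lt_succ_self]

end Words

section Positions

variable {K L : Finset ℕ} {c d : ℕ} {P : List AB → Prop}

lemma byLetter_succ_pos (σ : AB) : 0 < byLetter (d + 1) (c + 1) σ := by
  cases σ <;> exact Nat.succ_pos _

lemma P_u_zero (hc : 0 < c) (hd : 0 < d)
    (hm : ∀ σ, ∀ n ∈ byLetter K L σ, byLetter (d + 1) (c + 1) σ ≤ n)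
    (hP : ∀ w, P w ↔ ∀ w', Step K L w w' → ¬ P w') (i : ℕ) :
    P (u (d + 1) (c + 1) i 0) := by
  have hr : IsMaximalRuns (prefixRuns c i ++ [(.b, c)]) :=
    (isMaximalRuns_prefixRuns_append_suffixRuns c d hc hd hc d.succ_pos i 0).infix
      ⟨[], [(.a, d + 1)], by simp⟩
  have hshort : ∀ p ∈ prefixRuns c i ++ [(.b, c)], p.2 < byLetter (d + 1) (c + 1) p.1 :=
    forall_mem_append.2 ⟨prefixRuns_short c d hd, by simp [byLetter]⟩
  have hu : u (d + 1) (c + 1) i 0 = expandRuns (prefixRuns c i ++ [(.b, c)]) := by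
    simp [u_eq_expandRuns]
  exact hu ▸ P_of_forall_not_step hP (not_step_expandRuns hm byLetter_succ_pos hr hshort)

lemma P_u_succ_iff (hc : 0 < c) (hd : 0 < d)
    (hm : ∀ σ, ∀ n ∈ byLetter K L σ, byLetter (d + 1) (c + 1) σ ≤ n) (hl : c + 1 ∈ L)
    (hP : ∀ w, P w ↔ ∀ w', Step K L w w' → ¬ P w') (i j : ℕ) :
    P (u (d + 1) (c + 1) i (j + 1)) ↔
      ¬ P (expandRuns (prefixRuns c i) ++ expandRuns ((.a, d) :: suffixRuns d j)) := by
  have hr := isMaximalRuns_prefixRuns_append_suffixRuns c d hc hd c.succ_pos hd i j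
  have hu : u (d + 1) (c + 1) i (j + 1) =
      expandRuns (prefixRuns c i ++ (.b, c + 1) :: (.a, d) :: suffixRuns d j) := by
    simp [u_eq_expandRuns, suffixRuns, replicate_succ, replicate_append_cons_self]
  rw [hu]
  exact P_iff_not_of_step_iff hP (step_expandRuns_iff hm byLetter_succ_pos (σ := .b) hl hr
    (prefixRuns_short c d hd) (forall_mem_cons.2 ⟨by simp [byLetter], suffixRuns_short c d hc⟩))

lemma not_P_u_zero_succ (hc : 0 < c) (hd : 0 < d)
    (hm : ∀ σ, ∀ n ∈ byLetter K L σ, byLetter (d + 1) (c + 1) σ ≤ n) (hl : c + 1 ∈ L)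
    (hP : ∀ w, P w ↔ ∀ w', Step K L w w' → ¬ P w') (j : ℕ) :
    ¬ P (u (d + 1) (c + 1) 0 (j + 1)) := by
  have hr : IsMaximalRuns ((.a, d) :: suffixRuns d j) :=
    (isMaximalRuns_prefixRuns_append_suffixRuns c d hc hd c.succ_pos hd 0 j).infix
      ⟨[(.b, c + 1)], [], by simp [prefixRuns]⟩
  have hshort : ∀ p ∈ (.a, d) :: suffixRuns d j, p.2 < byLetter (d + 1) (c + 1) p.1 :=
    forall_mem_cons.2 ⟨by simp [byLetter], suffixRuns_short c d hc⟩
  have hW := P_of_forall_not_step hP (not_step_expandRuns hm byLetter_succ_pos hr hshort)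
  simpa [P_u_succ_iff hc hd hm hl hP, prefixRuns] using hW

lemma P_u_succ_succ_iff (hc : 0 < c) (hd : 0 < d)
    (hm : ∀ σ, ∀ n ∈ byLetter K L σ, byLetter (d + 1) (c + 1) σ ≤ n) (hk : d + 1 ∈ K)
    (hl : c + 1 ∈ L) (hP : ∀ w, P w ↔ ∀ w', Step K L w w' → ¬ P w') (i j : ℕ) :
    P (u (d + 1) (c + 1) (i + 1) (j + 1)) ↔ P (u (d + 1) (c + 1) i j) := by
  have hr := isMaximalRuns_prefixRuns_append_suffixRuns c d hc hd hc d.succ_pos i j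
  have hv : expandRuns (prefixRuns c (i + 1)) ++ expandRuns ((.a, d) :: suffixRuns d j) =
      expandRuns ((prefixRuns c i ++ [(.b, c)]) ++ (.a, d + 1) :: suffixRuns d j) := by
    rw [prefixRuns, replicate_succ']
    simp [prefixRuns, replicate_succ]
  have hu : u (d + 1) (c + 1) i j =
      expandRuns (prefixRuns c i ++ [(.b, c)]) ++ expandRuns (suffixRuns d j) := by
    simp [u_eq_expandRuns]
  have hV : P (expandRuns ((prefixRuns c i ++ [(.b, c)]) ++ (.a, d + 1) :: suffixRuns d j)) ↔
      ¬ P (u (d + 1) (c + 1) i j) :=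
    hu ▸ P_iff_not_of_step_iff hP (step_expandRuns_iff hm byLetter_succ_pos (σ := .a) hk
      (by simpa [byLetter] using hr) (forall_mem_append.2 ⟨prefixRuns_short c d hd,
        by simp [byLetter]⟩) (suffixRuns_short c d hc))
  rw [P_u_succ_iff hc hd hm hl hP, hv, hV, not_not]

end Positions

theorem stmt4 (K L : Finset ℕ) (k1 l1 : ℕ)
    (hk1 : k1 ∈ K) (hl1 : l1 ∈ L)
    (hkmin : ∀ k ∈ K, k1 ≤ k) (hlmin : ∀ l ∈ L, l1 ≤ l)
    (hkgt : ∀ k ∈ K, 1 < k) (hlgt : ∀ l ∈ L, 1 < l)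
    (P : List AB → Prop)
    (hP : ∀ w, P w ↔ ∀ w', Step K L w w' → ¬ P w') :
    ∀ i j : ℕ, P (u k1 l1 i j) ↔ j ≤ i := by
  obtain ⟨d, rfl, hd⟩ : ∃ d, k1 = d + 1 ∧ 0 < d := ⟨k1 - 1, by have := hkgt k1 hk1; omega⟩
  obtain ⟨c, rfl, hc⟩ : ∃ c, l1 = c + 1 ∧ 0 < c := ⟨l1 - 1, by have := hlgt l1 hl1; omega⟩
  have hm : ∀ σ, ∀ n ∈ byLetter K L σ, byLetter (d + 1) (c + 1) σ ≤ n := by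
    rintro (_ | _) n hn
    exacts [hkmin n hn, hlmin n hn]
  intro i
  induction i with
  | zero =>
    rintro (_ | j)
    · exact iff_of_true (P_u_zero hc hd hm hP 0) le_rfl
    · exact iff_of_false (not_P_u_zero_succ hc hd hm hl1 hP j) (by omega)
  | succ i ih =>
    rintro (_ | j)
    · exact iff_of_true (P_u_zero hc hd hm hP _) (Nat.zero_le _)
    · rw [P_u_succ_succ_iff hc hd hm hk1 hl1 hP, ih]
      omega
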